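/- Let T be a mesh element with simplicial face-based partition P_T = {P_{TF} : F ∈ F_T}, and define the lifting L_{TF}: U_T^{k,l} → RT^{k+1}(P_{TF}) by (L_{TF}û_T, η)_{P_{TF}} = -((∇r_T - G_T)û_T - ∇δ_Tû_T, η)_{P_{TF}} + ((δ_{TF}-δ_T)û_T, η·n_{TF})_F for all η ∈ RT^{k+1}(P_{TF}), and set S_T := ∑_{F∈F_T} L_{TF} (each lifting extended by zero outside P_{TF}). Then for all φ ∈ P^k(T)^d and all û_T ∈ U_T^{k,l}: (S_T û_T, φ)_T = 0. -/

import Mathlib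

open MeasureTheory Finset

/-- Membership in the local polynomial space `P^ℓ`. -/
def MemPolySpace (d ℓ : ℕ) (f : (Fin d → ℝ) → ℝ) : Prop :=
  ∃ P : MvPolynomial (Fin d) ℝ, P.totalDegree ≤ ℓ ∧ ∀ x, f x = MvPolynomial.eval x P

/-- Membership in `P^ℓ` for an integer degree `ℓ`, with the convention `P^{-1} = {0}`. -/
def MemPolySpaceInt (d : ℕ) (ℓ : ℤ) (f : (Fin d → ℝ) → ℝ) : Prop :=
  if ℓ < 0 then (∀ x, f x = 0) else MemPolySpace d ℓ.toNat f

/-- `i`-th partial derivative. -/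
noncomputable def pderiv' (d : ℕ) (f : (Fin d → ℝ) → ℝ) (i : Fin d) (x : Fin d → ℝ) : ℝ :=
  fderiv ℝ f x (Pi.single i 1)

/-- Laplacian via iterated partial derivatives. -/
noncomputable def lap' (d : ℕ) (f : (Fin d → ℝ) → ℝ) (x : Fin d → ℝ) : ℝ :=
  ∑ i, pderiv' d (fun y => pderiv' d f i y) i x

/-- Membership in the Raviart–Thomas–Nédélec space `RT^m = P^m(ℝ^d)^d + x P^m(ℝ^d)`. -/
def MemRT (d m : ℕ) (η : Fin d → (Fin d → ℝ) → ℝ) : Prop :=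
  ∃ (p : Fin d → (Fin d → ℝ) → ℝ) (q : (Fin d → ℝ) → ℝ),
    (∀ i, MemPolySpace d m (p i)) ∧ MemPolySpace d m q ∧
      ∀ i x, η i x = p i x + x i * q x

/-! Testing the defining equation of `L_{TF}` with `η = φ` (admissible because
`P^k ⊂ RT^{k+1}`) and summing over the faces turns `(S_T û_T, φ)_T` into
`-((∇r_T - G_T)û_T - ∇δ_T û_T, φ)_T + ∑_F ((δ_{TF} - δ_T)û_T, φ·n_{TF})_F`.
Integrating `∇r_T` and `∇δ_T` by parts and inserting the definition of `G_T`, the volume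
terms combine into `(δ_T - (r_T - v_T), div φ)_T`, which vanishes because `div φ ∈ P^{k-1} ⊆ P^l`,
and the face terms into `∑_F (r_T - v_F - δ_T, φ·n_{TF})_F = ∑_F (δ_{TF} - δ_T, φ·n_{TF})_F`,
because `φ·n_{TF} ∈ P^k`. The two contributions cancel. -/

namespace MvPolynomial

theorem totalDegree_pderiv_le {R σ : Type*} [CommSemiring R] [DecidableEq σ]
    (P : MvPolynomial σ R) (i : σ) : (pderiv i P).totalDegree ≤ P.totalDegree - 1 := by
  conv_lhs => rw [P.as_sum, map_sum]
  refine totalDegree_finsetSum_le fun s hs => ?_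
  rw [pderiv_monomial]
  obtain hsi | hsi := Nat.eq_zero_or_pos (s i)
  · simp [hsi]
  refine (totalDegree_monomial_le _ _).trans ?_
  have hs := le_totalDegree hs
  have hsplit : s - Finsupp.single i 1 + Finsupp.single i 1 = s :=
    tsub_add_cancel_of_le (Finsupp.single_le_iff.mpr hsi)
  rw [← hsplit, Finsupp.sum_add_index' (fun _ => rfl) (fun _ _ _ => rfl),
    Finsupp.sum_single_index rfl] at hs
  show (s - _).sum (fun _ e => e) ≤ _
  omega

variable {𝕜 σ : Type*} [NontriviallyNormedField 𝕜] [Fintype σ]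

theorem differentiable_eval (P : MvPolynomial σ 𝕜) : Differentiable 𝕜 fun y => eval y P := by
  induction P using MvPolynomial.induction_on with
  | C a => simp
  | add p q hp hq => simp only [map_add]; exact hp.add hq
  | mul_X p j hp => simp only [eval_mul, eval_X]; exact hp.mul (differentiable_apply j)

theorem fderiv_eval_single [DecidableEq σ] (P : MvPolynomial σ 𝕜) (x : σ → 𝕜) (i : σ) :
    fderiv 𝕜 (fun y => eval y P) x (Pi.single i 1) = eval x (pderiv i P) := by
  induction P using MvPolynomial.induction_on with
  | C a => simp
  | add p q hp hq =>
    simp only [map_add]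
    rw [fderiv_fun_add (differentiable_eval p x) (differentiable_eval q x)]
    simp [hp, hq]
  | mul_X p j hp =>
    simp only [eval_mul, eval_X]
    rw [fderiv_fun_mul (differentiable_eval p x) (differentiableAt_apply j x),
      (hasFDerivAt_apply j x).fderiv]
    simp [hp, Pi.single_apply, apply_ite (eval x)]

end MvPolynomial

section PolySpace

variable {d m : ℕ} {f : (Fin d → ℝ) → ℝ}

theorem memPolySpace_zero : MemPolySpace d m fun _ => 0 :=
  ⟨0, by simp, fun x => by simp⟩

theorem MemPolySpace.continuous (hf : MemPolySpace d m f) : Continuous f := by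
  obtain ⟨P, -, hP⟩ := hf
  simpa only [← funext hP] using MvPolynomial.continuous_eval P

theorem MemPolySpace.mono {m' : ℕ} (hf : MemPolySpace d m f) (h : m ≤ m') :
    MemPolySpace d m' f :=
  let ⟨P, hP, hfP⟩ := hf
  ⟨P, hP.trans h, hfP⟩

theorem MemPolySpace.add {g : (Fin d → ℝ) → ℝ} (hf : MemPolySpace d m f)
    (hg : MemPolySpace d m g) : MemPolySpace d m fun x => f x + g x := by
  obtain ⟨P, hPd, hP⟩ := hf
  obtain ⟨Q, hQd, hQ⟩ := hg
  exact ⟨P + Q, (MvPolynomial.totalDegree_add P Q).trans (max_le hPd hQd),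
    fun x => by simp [hP x, hQ x]⟩

theorem MemPolySpace.mul_const (hf : MemPolySpace d m f) (c : ℝ) :
    MemPolySpace d m fun x => f x * c := by
  obtain ⟨P, hPd, hP⟩ := hf
  exact ⟨c • P, (MvPolynomial.totalDegree_smul_le c P).trans hPd,
    fun x => by simp [hP x, mul_comm]⟩

theorem memPolySpace_sum {ι : Type*} {s : Finset ι} {f : ι → (Fin d → ℝ) → ℝ}
    (hf : ∀ i ∈ s, MemPolySpace d m (f i)) : MemPolySpace d m fun x => ∑ i ∈ s, f i x := by
  classical
  induction s using Finset.induction_on with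
  | empty => simpa using memPolySpace_zero
  | insert a s has ih =>
    simp only [Finset.sum_insert has]
    exact (hf a (mem_insert_self a s)).add (ih fun i hi => hf i (mem_insert_of_mem hi))

theorem MemPolySpace.pderiv' (hf : MemPolySpace d m f) (i : Fin d) :
    MemPolySpace d (m - 1) (_root_.pderiv' d f i) := by
  obtain ⟨P, hPd, hP⟩ := hf
  refine ⟨MvPolynomial.pderiv i P, (P.totalDegree_pderiv_le i).trans (by omega), fun x => ?_⟩
  rw [funext hP]
  exact MvPolynomial.fderiv_eval_single P x i

theorem MemPolySpace.pderiv'_eq_zero (hf : MemPolySpace d 0 f) (i : Fin d) :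
    _root_.pderiv' d f i = 0 := by
  obtain ⟨P, hPd, hP⟩ := hf
  have hconst : f = fun _ => MvPolynomial.coeff 0 P := by
    ext x
    rw [hP, MvPolynomial.totalDegree_eq_zero_iff_eq_C.mp (Nat.le_zero.mp hPd)]
    simp
  ext x
  simp [hconst, _root_.pderiv']

theorem MemPolySpace.continuous_pderiv' (hf : MemPolySpace d m f) (i : Fin d) :
    Continuous (_root_.pderiv' d f i) :=
  (hf.pderiv' i).continuous

end PolySpace

section PolySpaceInt

variable {d : ℕ} {l : ℤ}

theorem MemPolySpaceInt.exists_memPolySpace {f : (Fin d → ℝ) → ℝ} (hf : MemPolySpaceInt d l f) :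
    ∃ m, MemPolySpace d m f := by
  unfold MemPolySpaceInt at hf
  split_ifs at hf
  · exact ⟨0, by simpa [funext hf] using memPolySpace_zero⟩
  · exact ⟨_, hf⟩

theorem MemPolySpaceInt.continuous {f : (Fin d → ℝ) → ℝ} (hf : MemPolySpaceInt d l f) :
    Continuous f :=
  let ⟨_, hf⟩ := hf.exists_memPolySpace
  hf.continuous

theorem memPolySpaceInt_sum {ι : Type*} {s : Finset ι} {f : ι → (Fin d → ℝ) → ℝ}
    (hf : ∀ i ∈ s, MemPolySpaceInt d l (f i)) :
    MemPolySpaceInt d l fun x => ∑ i ∈ s, f i x := by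
  by_cases hl : l < 0 <;> simp only [MemPolySpaceInt, hl, if_true, if_false] at hf ⊢
  · exact fun x => sum_eq_zero fun i hi => hf i hi x
  · exact memPolySpace_sum hf

theorem MemPolySpace.pderiv'_memPolySpaceInt {m : ℕ} {f : (Fin d → ℝ) → ℝ}
    (hf : MemPolySpace d m f) (hl : (m : ℤ) - 1 ≤ l) (i : Fin d) :
    MemPolySpaceInt d l (_root_.pderiv' d f i) := by
  unfold MemPolySpaceInt
  split_ifs with hl0
  · obtain rfl : m = 0 := by omega
    simp [hf.pderiv'_eq_zero i]
  · exact (hf.pderiv' i).mono (by omega)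

end PolySpaceInt

theorem MemRT.continuous {d m : ℕ} {η : Fin d → (Fin d → ℝ) → ℝ} (hη : MemRT d m η)
    (i : Fin d) : Continuous (η i) := by
  obtain ⟨p, q, hp, hq, hη⟩ := hη
  have := (hp i).continuous
  have := hq.continuous
  rw [show η i = fun x => p i x + x i * q x from funext (hη i)]
  fun_prop

theorem memRT_of_memPolySpace {d m : ℕ} {η : Fin d → (Fin d → ℝ) → ℝ}
    (hη : ∀ i, MemPolySpace d m (η i)) : MemRT d m η :=
  ⟨η, fun _ => 0, hη, memPolySpace_zero, fun i x => by ring⟩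

section Integration

theorem Continuous.integrableOn_of_isBounded {X E : Type*} [MetricSpace X] [ProperSpace X]
    [MeasurableSpace X] [OpensMeasurableSpace X] [NormedAddCommGroup E] {μ : Measure X}
    [IsFiniteMeasureOnCompacts μ] {f : X → E} {T : Set X} (hf : Continuous f)
    (hT : Bornology.IsBounded T) : IntegrableOn f T μ :=
  (hf.continuousOn.integrableOn_compact hT.isCompact_closure).mono_set subset_closure

theorem Continuous.integrable_of_measure_compl_eq_zero {X E : Type*} [TopologicalSpace X]
    [T2Space X] [MeasurableSpace X] [OpensMeasurableSpace X] [NormedAddCommGroup E]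
    {μ : Measure X} [IsFiniteMeasure μ] {f : X → E} {K : Set X} (hf : Continuous f)
    (hK : IsCompact K) (hμK : μ Kᶜ = 0) : Integrable f μ := by
  rw [← Measure.restrict_eq_self_of_ae_mem (s := K) (ae_iff.mpr hμK)]
  exact hf.continuousOn.integrableOn_compact hK

variable {X E ι : Type*} [MeasurableSpace X] [NormedAddCommGroup E] [NormedSpace ℝ E]
  {μ : Measure X} [Fintype ι] {T : Set X} {P : ι → Set X}

theorem setIntegral_eq_sum_of_ae_partition {f : X → E} (hP : ∀ F, MeasurableSet (P F))
    (hPT : ∀ F, P F ⊆ T) (hdisj : ∀ F F', F ≠ F' → μ (P F ∩ P F') = 0)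
    (hcover : μ (T \ ⋃ F, P F) = 0) (hf : IntegrableOn f T μ) :
    ∫ x in T, f x ∂μ = ∑ F, ∫ x in P F, f x ∂μ := by
  have hTU : T =ᵐ[μ] ⋃ F, P F :=
    ae_eq_set.mpr ⟨hcover, by simp [Set.sdiff_eq_empty.mpr (Set.iUnion_subset hPT)]⟩
  rw [setIntegral_congr_set hTU, integral_iUnion_ae (fun F => (hP F).nullMeasurableSet) hdisj
    (hf.mono_set (Set.iUnion_subset hPT)), tsum_fintype]

theorem setIntegral_sum_eq_sum_setIntegral_of_support {g : ι → X → E}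
    (hP : ∀ F, MeasurableSet (P F)) (hPT : ∀ F, P F ⊆ T) (hg : ∀ F, IntegrableOn (g F) (P F) μ)
    (hg0 : ∀ F, ∀ x ∉ P F, g F x = 0) :
    ∫ x in T, ∑ F, g F x ∂μ = ∑ F, ∫ x in P F, g F x ∂μ := by
  have hind : ∀ F, g F = (P F).indicator (g F) := fun F => by
    ext x
    by_cases hx : x ∈ P F <;> simp [hx, hg0]
  rw [integral_finsetSum _ fun F _ => by
    rw [hind F]
    exact ((hg F).integrable_indicator (hP F)).integrableOn]
  refine sum_congr rfl fun F _ => ?_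
  nth_rewrite 1 [hind F]
  rw [setIntegral_indicator (hP F), Set.inter_eq_self_of_subset_right (hPT F)]

end Integration

theorem setIntegral_sum_pairing_eq_sum_setIntegral {X ι κ : Type*} [MetricSpace X]
    [ProperSpace X] [MeasurableSpace X] [OpensMeasurableSpace X] {μ : Measure X}
    [IsFiniteMeasureOnCompacts μ] [Fintype ι] [Fintype κ] {T : Set X} {P : ι → Set X}
    (hT : Bornology.IsBounded T) (hP : ∀ F, MeasurableSet (P F)) (hPT : ∀ F, P F ⊆ T)
    {L : ι → κ → X → ℝ} {φ : κ → X → ℝ} (hφ : ∀ i, Continuous (φ i))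
    (hL : ∀ F, ∃ η : κ → X → ℝ, (∀ i, Continuous (η i)) ∧
      (∀ x ∈ P F, ∀ i, L F i x = η i x) ∧ ∀ x ∉ P F, ∀ i, L F i x = 0) :
    ∫ x in T, ∑ i, (∑ F, L F i x) * φ i x ∂μ = ∑ F, ∫ x in P F, ∑ i, L F i x * φ i x ∂μ := by
  choose η hη hLη hL0 using hL
  have hint : ∀ F, IntegrableOn (fun x => ∑ i, L F i x * φ i x) (P F) μ := fun F =>
    (((show Continuous fun x => ∑ i, η F i x * φ i x by fun_prop).integrableOn_of_isBounded
      hT).mono_set (hPT F)).congr_fun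
      (fun x hx => by simp only [hLη F x hx]) (hP F)
  have hswap : ∀ x, ∑ i, (∑ F, L F i x) * φ i x = ∑ F, ∑ i, L F i x * φ i x := fun x => by
    simp only [sum_mul]
    exact sum_comm
  simp only [hswap]
  exact setIntegral_sum_eq_sum_setIntegral_of_support hP hPT hint fun F x hx => by simp [hL0 F x hx]

section Residual

variable {d k mr mδ : ℕ} {ι : Type*} [Fintype ι] {T : Set (Fin d → ℝ)}
  {μF : ι → Measure (Fin d → ℝ)} {nF : ι → Fin d → ℝ}

theorem setIntegral_grad_residual_eq_sum_face_jump
    (hintT : ∀ f : (Fin d → ℝ) → ℝ, Continuous f → IntegrableOn f T)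
    (hintF : ∀ F (f : (Fin d → ℝ) → ℝ), Continuous f → Integrable f (μF F))
    (hIBP : ∀ f : (Fin d → ℝ) → ℝ, (∃ m, MemPolySpace d m f) →
      ∀ φ : Fin d → (Fin d → ℝ) → ℝ, (∀ i, ∃ m, MemPolySpace d m (φ i)) →
        ∫ x in T, ∑ i, pderiv' d f i x * φ i x =
          -(∫ x in T, f x * ∑ i, pderiv' d (φ i) i x) +
            ∑ F, ∫ x, f x * ∑ i, φ i x * nF F i ∂(μF F))
    {vT r δT : (Fin d → ℝ) → ℝ} {vF δF : ι → (Fin d → ℝ) → ℝ}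
    {G φ : Fin d → (Fin d → ℝ) → ℝ} (hφ : ∀ i, MemPolySpace d k (φ i))
    (hvT : Continuous vT) (hvF : ∀ F, Continuous (vF F)) (hG : ∀ i, Continuous (G i))
    (hGdef : ∫ x in T, ∑ i, G i x * φ i x =
      -(∫ x in T, vT x * ∑ i, pderiv' d (φ i) i x) +
        ∑ F, ∫ x, vF F x * ∑ i, φ i x * nF F i ∂(μF F))
    (hr : MemPolySpace d mr r) (hδT : MemPolySpace d mδ δT)
    (hδTdef : ∫ x in T, (δT x - (r x - vT x)) * ∑ i, pderiv' d (φ i) i x = 0)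
    (hδF : ∀ F, Continuous (δF F))
    (hδFdef : ∀ F, ∫ x, (δF F x - (r x - vF F x)) * ∑ i, φ i x * nF F i ∂(μF F) = 0) :
    ∫ x in T, ∑ i, (pderiv' d r i x - G i x - pderiv' d δT i x) * φ i x =
      ∑ F, ∫ x, (δF F x - δT x) * ∑ i, φ i x * nF F i ∂(μF F) := by
  have hφc := fun i => (hφ i).continuous
  have hdivc := fun i => (hφ i).continuous_pderiv' i
  have hrc := hr.continuous
  have hdrc := hr.continuous_pderiv'
  have hδTc := hδT.continuous
  have hdδTc := hδT.continuous_pderiv'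
  have hvol : ∫ x in T, ∑ i, (pderiv' d r i x - G i x - pderiv' d δT i x) * φ i x =
      (∫ x in T, ∑ i, pderiv' d r i x * φ i x) - (∫ x in T, ∑ i, G i x * φ i x) -
        ∫ x in T, ∑ i, pderiv' d δT i x * φ i x := by
    simp only [sub_mul, sum_sub_distrib]
    rw [integral_sub, integral_sub]
    all_goals exact hintT _ (by fun_prop)
  have hface : ∀ F, ∫ x, (δF F x - δT x) * ∑ i, φ i x * nF F i ∂(μF F) =
      (∫ x, r x * ∑ i, φ i x * nF F i ∂(μF F)) - (∫ x, vF F x * ∑ i, φ i x * nF F i ∂(μF F)) -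
        ∫ x, δT x * ∑ i, φ i x * nF F i ∂(μF F) := fun F => by
    have h := hδFdef F
    simp only [sub_mul] at h ⊢
    rw [integral_sub, integral_sub] at h
    rw [integral_sub]
    · linarith
    all_goals exact hintF F _ (by fun_prop)
  simp only [sub_mul] at hδTdef
  rw [integral_sub, integral_sub] at hδTdef
  · rw [hvol, hIBP r ⟨_, hr⟩ φ fun i => ⟨k, hφ i⟩, hGdef, hIBP δT ⟨_, hδT⟩ φ fun i => ⟨k, hφ i⟩,
      sum_congr rfl fun F _ => hface F, sum_sub_distrib, sum_sub_distrib]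
    linarith
  all_goals exact hintT _ (by fun_prop)

end Residual

theorem rt_stabilisation_orthogonality_general (d k : ℕ) (l : ℤ)
    (hl : l = (k : ℤ) - 1 ∨ l = (k : ℤ) ∨ l = (k : ℤ) + 1)
    (T : Set (Fin d → ℝ))
    (hTbdd : Bornology.IsBounded T)
    (ι : Type) [Fintype ι]
    (μF : ι → Measure (Fin d → ℝ)) (hμFfin : ∀ F, IsFiniteMeasure (μF F))
    (hμFsupp : ∀ F, μF F (frontier T)ᶜ = 0)
    (nF : ι → Fin d → ℝ)
    -- the face-based partition P_T = {PF F : F ∈ ι} of T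
    (PF : ι → Set (Fin d → ℝ)) (hPFmeas : ∀ F, MeasurableSet (PF F))
    (hPFsub : ∀ F, PF F ⊆ T)
    (hPFdisj : ∀ F F', F ≠ F' → volume (PF F ∩ PF F') = 0)
    (hPFcover : volume (T \ ⋃ F, PF F) = 0)
    -- integration by parts on T against polynomial fields
    (hIBP : ∀ f : (Fin d → ℝ) → ℝ, (∃ m, MemPolySpace d m f) →
      ∀ φ : Fin d → (Fin d → ℝ) → ℝ, (∀ i, ∃ m, MemPolySpace d m (φ i)) →
        ∫ x in T, ∑ i, pderiv' d f i x * φ i x =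
          -(∫ x in T, f x * ∑ i, pderiv' d (φ i) i x) +
            ∑ F, ∫ x, f x * ∑ i, φ i x * nF F i ∂(μF F))
    -- the local unknowns û_T ∈ U_T^{k,l}
    (vT : (Fin d → ℝ) → ℝ) (hvT : MemPolySpaceInt d l vT)
    (vF : ι → (Fin d → ℝ) → ℝ) (hvF : ∀ F, MemPolySpace d k (vF F))
    -- the gradient reconstruction G_T û_T
    (G : Fin d → (Fin d → ℝ) → ℝ) (hG : ∀ i, MemPolySpace d k (G i))
    (hGdef : ∀ φ : Fin d → (Fin d → ℝ) → ℝ, (∀ i, MemPolySpace d k (φ i)) →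
      ∫ x in T, ∑ i, G i x * φ i x =
        -(∫ x in T, vT x * ∑ i, pderiv' d (φ i) i x) +
          ∑ F, ∫ x, vF F x * ∑ i, φ i x * nF F i ∂(μF F))
    -- the potential reconstruction r_T û_T ∈ P^{k+1}(T)
    (r : (Fin d → ℝ) → ℝ) (hr : MemPolySpace d (k + 1) r)
    -- the difference operators
    (δT : (Fin d → ℝ) → ℝ) (hδT : MemPolySpaceInt d l δT)
    (hδTdef : ∀ w, MemPolySpaceInt d l w →
      ∫ x in T, (δT x - (r x - vT x)) * w x = 0)
    (δF : ι → (Fin d → ℝ) → ℝ) (hδF : ∀ F, MemPolySpace d k (δF F))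
    (hδFdef : ∀ F, ∀ w, MemPolySpace d k w →
      ∫ x, (δF F x - (r x - vF F x)) * w x ∂(μF F) = 0)
    -- the liftings L_{TF} û_T ∈ RT^{k+1}(P_{TF}), extended by zero outside P_{TF}
    (L : ι → Fin d → (Fin d → ℝ) → ℝ)
    (hLRT : ∀ F, ∃ η : Fin d → (Fin d → ℝ) → ℝ, MemRT d (k + 1) η ∧
      (∀ x ∈ PF F, ∀ i, L F i x = η i x) ∧ ∀ x ∉ PF F, ∀ i, L F i x = 0)
    (hLdef : ∀ F, ∀ η : Fin d → (Fin d → ℝ) → ℝ, MemRT d (k + 1) η →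
      ∫ x in PF F, ∑ i, L F i x * η i x =
        -(∫ x in PF F, ∑ i, (pderiv' d r i x - G i x - pderiv' d δT i x) * η i x) +
          ∫ x, (δF F x - δT x) * ∑ i, η i x * nF F i ∂(μF F)) :
    -- conclusion: (S_T û_T, φ)_T = 0 for all φ ∈ P^k(T)^d
    ∀ φ : Fin d → (Fin d → ℝ) → ℝ, (∀ i, MemPolySpace d k (φ i)) →
      ∫ x in T, ∑ i, (∑ F, L F i x) * φ i x = 0 := by
  intro φ hφ
  have hK : IsCompact (frontier T) :=
    hTbdd.isCompact_closure.of_isClosed_subset isClosed_frontier frontier_subset_closure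
  have hintT : ∀ f : (Fin d → ℝ) → ℝ, Continuous f → IntegrableOn f T := fun f hf =>
    hf.integrableOn_of_isBounded hTbdd
  have hintF : ∀ F (f : (Fin d → ℝ) → ℝ), Continuous f → Integrable f (μF F) := fun F f hf =>
    haveI := hμFfin F
    hf.integrable_of_measure_compl_eq_zero hK (hμFsupp F)
  obtain ⟨mδ, hδTm⟩ := hδT.exists_memPolySpace
  have hdrc := hr.continuous_pderiv'
  have hdδTc := hδTm.continuous_pderiv'
  have hGc := fun i => (hG i).continuous
  have hφc := fun i => (hφ i).continuous
  have hdiv : MemPolySpaceInt d l fun x => ∑ i, pderiv' d (φ i) i x :=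
    memPolySpaceInt_sum fun i _ => (hφ i).pderiv'_memPolySpaceInt (by omega) i
  rw [setIntegral_sum_pairing_eq_sum_setIntegral hTbdd hPFmeas hPFsub hφc
      fun F => (hLRT F).imp fun η ⟨hη, hLη⟩ => ⟨hη.continuous, hLη⟩,
    sum_congr rfl fun F _ => hLdef F φ (memRT_of_memPolySpace fun i => (hφ i).mono k.le_succ),
    sum_add_distrib, sum_neg_distrib,
    ← setIntegral_eq_sum_of_ae_partition hPFmeas hPFsub hPFdisj hPFcover (hintT _ (by fun_prop)),
    setIntegral_grad_residual_eq_sum_face_jump hintT hintF hIBP hφ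
      hvT.continuous (fun F => (hvF F).continuous) hGc (hGdef φ hφ) hr hδTm (hδTdef _ hdiv)
      (fun F => (hδF F).continuous)
      (fun F => hδFdef F _ (memPolySpace_sum fun i _ => (hφ i).mul_const (nF F i))),
    neg_add_cancel]

/-- **Orthogonality (property S2) of the Raviart–Thomas–Nédélec stabilisation.**
Let `T` be a mesh element with face-based simplicial partition `{P_{TF}}`, and let
`L_{TF} : U_T^{k,l} → RT^{k+1}(P_{TF})` be the lifting defined by
`(L_{TF}û_T, η)_{P_{TF}} = -((∇r_T-G_T)û_T - ∇δ_Tû_T, η)_{P_{TF}} + ((δ_{TF}-δ_T)û_T, η·n_{TF})_F`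
for all `η ∈ RT^{k+1}(P_{TF})`, each lifting being extended by zero outside `P_{TF}`;
set `S_T := ∑_F L_{TF}`.  Then `(S_T û_T, φ)_T = 0` for all `φ ∈ P^k(T)^d`. -/
theorem rt_stabilisation_orthogonality (d k : ℕ) (l : ℤ)
    (hl : l = (k : ℤ) - 1 ∨ l = (k : ℤ) ∨ l = (k : ℤ) + 1)
    (T : Set (Fin d → ℝ))
    (hTopen : IsOpen T) (hTbdd : Bornology.IsBounded T) (hTpos : 0 < volume T)
    (ι : Type) [Fintype ι]
    (μF : ι → Measure (Fin d → ℝ)) (hμFfin : ∀ F, IsFiniteMeasure (μF F))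
    (hμFsupp : ∀ F, μF F (frontier T)ᶜ = 0)
    (nF : ι → Fin d → ℝ)
    -- the face-based partition P_T = {PF F : F ∈ ι} of T
    (PF : ι → Set (Fin d → ℝ)) (hPFmeas : ∀ F, MeasurableSet (PF F))
    (hPFsub : ∀ F, PF F ⊆ T)
    (hPFdisj : ∀ F F', F ≠ F' → volume (PF F ∩ PF F') = 0)
    (hPFcover : volume (T \ ⋃ F, PF F) = 0)
    -- integration by parts on T against polynomial fields
    (hIBP : ∀ f : (Fin d → ℝ) → ℝ, (∃ m, MemPolySpace d m f) →
      ∀ φ : Fin d → (Fin d → ℝ) → ℝ, (∀ i, ∃ m, MemPolySpace d m (φ i)) →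
        ∫ x in T, ∑ i, pderiv' d f i x * φ i x =
          -(∫ x in T, f x * ∑ i, pderiv' d (φ i) i x) +
            ∑ F, ∫ x, f x * ∑ i, φ i x * nF F i ∂(μF F))
    -- the local unknowns û_T ∈ U_T^{k,l}
    (vT : (Fin d → ℝ) → ℝ) (hvT : MemPolySpaceInt d l vT)
    (vF : ι → (Fin d → ℝ) → ℝ) (hvF : ∀ F, MemPolySpace d k (vF F))
    -- the gradient reconstruction G_T û_T
    (G : Fin d → (Fin d → ℝ) → ℝ) (hG : ∀ i, MemPolySpace d k (G i))
    (hGdef : ∀ φ : Fin d → (Fin d → ℝ) → ℝ, (∀ i, MemPolySpace d k (φ i)) →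
      ∫ x in T, ∑ i, G i x * φ i x =
        -(∫ x in T, vT x * ∑ i, pderiv' d (φ i) i x) +
          ∑ F, ∫ x, vF F x * ∑ i, φ i x * nF F i ∂(μF F))
    -- the potential reconstruction r_T û_T ∈ P^{k+1}(T)
    (r : (Fin d → ℝ) → ℝ) (hr : MemPolySpace d (k + 1) r)
    (hrdef : ∀ w, MemPolySpace d (k + 1) w →
      ∫ x in T, ∑ i, pderiv' d r i x * pderiv' d w i x =
        -(∫ x in T, vT x * lap' d w x) +
          ∑ F, ∫ x, vF F x * ∑ i, pderiv' d w i x * nF F i ∂(μF F))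
    (hravg : ∫ x in T, (r x - vT x) = 0)
    -- the difference operators
    (δT : (Fin d → ℝ) → ℝ) (hδT : MemPolySpaceInt d l δT)
    (hδTdef : ∀ w, MemPolySpaceInt d l w →
      ∫ x in T, (δT x - (r x - vT x)) * w x = 0)
    (δF : ι → (Fin d → ℝ) → ℝ) (hδF : ∀ F, MemPolySpace d k (δF F))
    (hδFdef : ∀ F, ∀ w, MemPolySpace d k w →
      ∫ x, (δF F x - (r x - vF F x)) * w x ∂(μF F) = 0)
    -- the liftings L_{TF} û_T ∈ RT^{k+1}(P_{TF}), extended by zero outside P_{TF}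
    (L : ι → Fin d → (Fin d → ℝ) → ℝ)
    (hLRT : ∀ F, ∃ η : Fin d → (Fin d → ℝ) → ℝ, MemRT d (k + 1) η ∧
      (∀ x ∈ PF F, ∀ i, L F i x = η i x) ∧ ∀ x ∉ PF F, ∀ i, L F i x = 0)
    (hLdef : ∀ F, ∀ η : Fin d → (Fin d → ℝ) → ℝ, MemRT d (k + 1) η →
      ∫ x in PF F, ∑ i, L F i x * η i x =
        -(∫ x in PF F, ∑ i, (pderiv' d r i x - G i x - pderiv' d δT i x) * η i x) +
          ∫ x, (δF F x - δT x) * ∑ i, η i x * nF F i ∂(μF F)) :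
    -- conclusion: (S_T û_T, φ)_T = 0 for all φ ∈ P^k(T)^d
    ∀ φ : Fin d → (Fin d → ℝ) → ℝ, (∀ i, MemPolySpace d k (φ i)) →
      ∫ x in T, ∑ i, (∑ F, L F i x) * φ i x = 0 :=
  rt_stabilisation_orthogonality_general d k l hl T hTbdd ι μF hμFfin hμFsupp nF PF hPFmeas hPFsub
    hPFdisj hPFcover hIBP vT hvT vF hvF G hG hGdef r hr δT hδT hδTdef δF hδF hδFdef L hLRT hLdef
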